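/- If bivariate distribution functions H_N converge pointwise to a distribution function H, the product y₁y₀ is uniformly integrable with respect to {H_N}, and H has marginals G, F, then E_{H_N}[y₁y₀] → E_H[y₁y₀]; in particular, applying this to the Fréchet couplings, the plug-in covariance bound estimators converge: Ŝ^H → sup_{h∈𝓗} Cov_h(y₁,y₀) and Ŝ^L → inf_{h∈𝓗} Cov_h(y₁,y₀), where 𝓗 is the set of all couplings of G and F. -/

import Mathlib

/-!
Pointwise convergence of the joint distribution functions gives convergence of the masses of
half-open rectangles, hence of the integrals of step functions on rectangular grids. A bounded
continuous function is uniformly approximated by such step functions on a square carrying almost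
all the mass of the limit, so its integrals converge. Uniform integrability lets one replace
`y₁ y₀` by its truncation at a large level, uniformly in `N`.

For the covariance bounds, write `x = ∫ (1{0 ≤ s} - 1{x ≤ s}) ds`. By Fubini, `E_h[y₁ y₀]` is the
integral over `(s, t)` of the joint distribution function of `h` at `(s, t)` plus terms that only
depend on the marginals of `h` (Hoeffding). Among couplings of fixed marginals `E_h[y₁ y₀]` is
therefore monotone in the joint distribution function, and the Fréchet bounds
`max 0 (G + F - 1) ≤ H ≤ min G F` show that the two Fréchet couplings are extremal.
-/

open MeasureTheory Filter Set Topology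

lemma tendsto_of_forall_approx {ι : Type*} {l : Filter ι} {u : ι → ℝ} {x : ℝ}
    (h : ∀ ε > 0, ∃ (v : ι → ℝ) (y : ℝ),
      Tendsto v l (𝓝 y) ∧ (∀ᶠ i in l, |u i - v i| ≤ ε) ∧ |x - y| ≤ ε) :
    Tendsto u l (𝓝 x) := by
  refine Metric.tendsto_nhds.2 fun ε hε => ?_
  obtain ⟨v, y, hv, huv, hxy⟩ := h (ε / 3) (by positivity)
  filter_upwards [huv, Metric.tendsto_nhds.1 hv (ε / 3) (by positivity)] with i h₁ h₂
  rw [Real.dist_eq] at h₂ ⊢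
  rw [abs_le] at h₁ hxy
  rw [abs_lt] at h₂ ⊢
  constructor <;> linarith

section Rectangles

variable {μ : Measure (ℝ × ℝ)} [IsFiniteMeasure μ]

lemma measureReal_Ioc_prod {a b : ℝ} (hab : a ≤ b) {T : Set ℝ} (hT : MeasurableSet T) :
    μ.real (Ioc a b ×ˢ T) = μ.real (Iic b ×ˢ T) - μ.real (Iic a ×ˢ T) := by
  have : Ioc a b ×ˢ T = Iic b ×ˢ T \ Iic a ×ˢ T := by
    ext ⟨x, y⟩; simp only [mem_prod, mem_Ioc, mem_Iic, Set.mem_sdiff]; grind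
  rw [this, measureReal_sdiff (prod_mono (Iic_subset_Iic.2 hab) le_rfl)
    (measurableSet_Iic.prod hT)]

lemma measureReal_prod_Ioc {c d : ℝ} (hcd : c ≤ d) {S : Set ℝ} (hS : MeasurableSet S) :
    μ.real (S ×ˢ Ioc c d) = μ.real (S ×ˢ Iic d) - μ.real (S ×ˢ Iic c) := by
  have : S ×ˢ Ioc c d = S ×ˢ Iic d \ S ×ˢ Iic c := by
    ext ⟨x, y⟩; simp only [mem_prod, mem_Ioc, mem_Iic, Set.mem_sdiff]; grind
  rw [this, measureReal_sdiff (prod_mono le_rfl (Iic_subset_Iic.2 hcd))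
    (hS.prod measurableSet_Iic)]

lemma measureReal_Ioc_prod_Ioc {a b c d : ℝ} (hab : a ≤ b) (hcd : c ≤ d) :
    μ.real (Ioc a b ×ˢ Ioc c d) = μ.real (Iic b ×ˢ Iic d) - μ.real (Iic a ×ˢ Iic d)
      - (μ.real (Iic b ×ˢ Iic c) - μ.real (Iic a ×ˢ Iic c)) := by
  rw [measureReal_Ioc_prod hab measurableSet_Ioc, measureReal_prod_Ioc hcd measurableSet_Iic,
    measureReal_prod_Ioc hcd measurableSet_Iic]
  ring

lemma tendsto_measureReal_Ioc_prod_Ioc_atTop :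
    Tendsto (fun M : ℝ => μ.real (Ioc (-M) M ×ˢ Ioc (-M) M)) atTop (𝓝 (μ.real univ)) := by
  have hmono : Monotone (fun M : ℝ => Ioc (-M) M ×ˢ Ioc (-M) M) := fun M M' h =>
    prod_mono (Ioc_subset_Ioc (neg_le_neg h) h) (Ioc_subset_Ioc (neg_le_neg h) h)
  have hunion : ⋃ M : ℝ, Ioc (-M) M ×ˢ Ioc (-M) M = univ := by
    refine eq_univ_of_forall fun p => mem_iUnion.2 ⟨|p.1| + |p.2| + 1, ?_⟩
    simp only [mem_prod, mem_Ioc, neg_add]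
    refine ⟨⟨?_, ?_⟩, ?_, ?_⟩ <;>
      linarith [neg_abs_le p.1, le_abs_self p.1, neg_abs_le p.2, le_abs_self p.2]
  have := tendsto_measure_iUnion_atTop (μ := μ) hmono
  rw [hunion] at this
  exact (ENNReal.tendsto_toReal (measure_ne_top μ univ)).comp this

end Rectangles

lemma tendsto_measureReal_Ioc_prod_Ioc_of_cdf {μs : ℕ → Measure (ℝ × ℝ)} {μ : Measure (ℝ × ℝ)}
    [∀ N, IsFiniteMeasure (μs N)] [IsFiniteMeasure μ]
    (hcdf : ∀ x y : ℝ, Tendsto (fun N => (μs N).real (Iic x ×ˢ Iic y)) atTop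
      (𝓝 (μ.real (Iic x ×ˢ Iic y))))
    {a b c d : ℝ} (hab : a ≤ b) (hcd : c ≤ d) :
    Tendsto (fun N => (μs N).real (Ioc a b ×ˢ Ioc c d)) atTop
      (𝓝 (μ.real (Ioc a b ×ˢ Ioc c d))) := by
  simp only [measureReal_Ioc_prod_Ioc hab hcd]
  exact ((hcdf b d).sub (hcdf a d)).sub ((hcdf b c).sub (hcdf a c))

section StepApproximation

variable {α ι : Type*} [MeasurableSpace α] {μ : Measure α} [IsProbabilityMeasure μ]

lemma abs_integral_sub_sum_le {f : α → ℝ} (hf : Integrable f μ) {C η : ℝ}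
    (hC : ∀ x, |f x| ≤ C) (hη : 0 ≤ η) {s : Finset ι} {R : ι → Set α}
    (hR : ∀ i ∈ s, MeasurableSet (R i)) (hd : (s : Set ι).PairwiseDisjoint R) (c : ι → ℝ)
    (hc : ∀ i ∈ s, ∀ x ∈ R i, |f x - c i| ≤ η) :
    |∫ x, f x ∂μ - ∑ i ∈ s, c i * μ.real (R i)| ≤ η + C * μ.real (⋃ i ∈ s, R i)ᶜ := by
  set U := ⋃ i ∈ s, R i
  have hsplit : ∫ x, f x ∂μ = ∑ i ∈ s, ∫ x in R i, f x ∂μ + ∫ x in Uᶜ, f x ∂μ := by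
    rw [← integral_biUnion_finset s hR hd fun i _ => hf.integrableOn,
      integral_add_compl (Finset.measurableSet_biUnion s hR) hf]
  have hcell : ∀ i ∈ s, |∫ x in R i, f x ∂μ - c i * μ.real (R i)| ≤ η * μ.real (R i) := by
    intro i hi
    rw [mul_comm, ← smul_eq_mul, ← setIntegral_const, ← integral_sub hf.integrableOn
      (integrableOn_const (measure_ne_top μ _))]
    simpa only [Real.norm_eq_abs] using norm_setIntegral_le_of_norm_le_const
      (f := fun x => f x - c i) (measure_lt_top μ _) fun x hx => by
        simpa only [Real.norm_eq_abs] using hc i hi x hx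
  have htail : |∫ x in Uᶜ, f x ∂μ| ≤ C * μ.real Uᶜ := by
    simpa only [Real.norm_eq_abs] using norm_setIntegral_le_of_norm_le_const
      (f := f) (measure_lt_top μ Uᶜ) fun x _ => by simpa only [Real.norm_eq_abs] using hC x
  have hsum : ∑ i ∈ s, μ.real (R i) ≤ 1 := by
    rw [← measureReal_biUnion_finset hd hR]
    exact measureReal_le_one
  calc |∫ x, f x ∂μ - ∑ i ∈ s, c i * μ.real (R i)|
      = |∑ i ∈ s, (∫ x in R i, f x ∂μ - c i * μ.real (R i)) + ∫ x in Uᶜ, f x ∂μ| := by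
        rw [hsplit, Finset.sum_sub_distrib]; ring_nf
    _ ≤ ∑ i ∈ s, η * μ.real (R i) + C * μ.real Uᶜ :=
        (abs_add_le _ _).trans (add_le_add ((Finset.abs_sum_le_sum_abs _ _).trans
          (Finset.sum_le_sum hcell)) htail)
    _ ≤ η + C * μ.real Uᶜ := by
        rw [← Finset.mul_sum]
        gcongr
        exact mul_le_of_le_one_right hη hsum

end StepApproximation

section Grid

variable (a : ℕ → ℝ)

def gridCell (k : ℕ × ℕ) : Set (ℝ × ℝ) := Ioc (a k.1) (a (k.1 + 1)) ×ˢ Ioc (a k.2) (a (k.2 + 1))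

def gridCorner (k : ℕ × ℕ) : ℝ × ℝ := (a (k.1 + 1), a (k.2 + 1))

variable {a}

lemma measurableSet_gridCell (k : ℕ × ℕ) : MeasurableSet (gridCell a k) :=
  measurableSet_Ioc.prod measurableSet_Ioc

lemma pairwise_disjoint_gridCell (ha : Monotone a) :
    Pairwise (Function.onFun Disjoint (gridCell a)) := by
  rintro ⟨i, j⟩ ⟨i', j'⟩ hne
  rcases eq_or_ne i i' with rfl | hi
  · exact disjoint_prod.2 <| .inr <|
      ha.pairwise_disjoint_on_Ioc_succ fun h => hne (Prod.ext rfl h)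
  · exact disjoint_prod.2 <| .inl <| ha.pairwise_disjoint_on_Ioc_succ hi

lemma biUnion_gridCell (ha : Monotone a) (n : ℕ) :
    ⋃ k ∈ Finset.range n ×ˢ Finset.range n, gridCell a k
      = Ioc (a 0) (a n) ×ˢ Ioc (a 0) (a n) := by
  have h1 : ∀ x, (∃ i < n, x ∈ Ioc (a i) (a (i + 1))) ↔ x ∈ Ioc (a 0) (a n) := by
    intro x
    rw [← ha.biUnion_Ico_Ioc_map_succ 0 n]
    simp only [mem_iUnion, mem_Ico, Nat.zero_le, true_and, Order.succ_eq_add_one, exists_prop]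
  ext ⟨x, y⟩
  simp only [mem_iUnion, Finset.mem_product, Finset.mem_range, gridCell, mem_prod, ← h1]
  constructor
  · rintro ⟨⟨i, j⟩, ⟨hi, hj⟩, hx, hy⟩
    exact ⟨⟨i, hi, hx⟩, j, hj, hy⟩
  · rintro ⟨⟨i, hi, hx⟩, j, hj, hy⟩
    exact ⟨⟨i, j⟩, ⟨hi, hj⟩, hx, hy⟩

lemma gridCell_subset_Icc_prod_Icc (ha : Monotone a) {n : ℕ} {k : ℕ × ℕ}
    (hk : k ∈ Finset.range n ×ˢ Finset.range n) :
    gridCell a k ⊆ Icc (a 0) (a n) ×ˢ Icc (a 0) (a n) := by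
  simp only [Finset.mem_product, Finset.mem_range] at hk
  exact prod_mono (Ioc_subset_Icc_self.trans (Icc_subset_Icc (ha (Nat.zero_le _)) (ha hk.1)))
    (Ioc_subset_Icc_self.trans (Icc_subset_Icc (ha (Nat.zero_le _)) (ha hk.2)))

lemma gridCorner_mem_Icc_prod_Icc (ha : Monotone a) {n : ℕ} {k : ℕ × ℕ}
    (hk : k ∈ Finset.range n ×ˢ Finset.range n) :
    gridCorner a k ∈ Icc (a 0) (a n) ×ˢ Icc (a 0) (a n) := by
  simp only [Finset.mem_product, Finset.mem_range] at hk
  exact ⟨⟨ha (Nat.zero_le _), ha hk.1⟩, ha (Nat.zero_le _), ha hk.2⟩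

lemma dist_gridCorner_lt {δ : ℝ} (hδ : ∀ i, a (i + 1) - a i < δ) {k : ℕ × ℕ} {p : ℝ × ℝ}
    (hp : p ∈ gridCell a k) : dist p (gridCorner a k) < δ := by
  obtain ⟨⟨h1, h2⟩, h3, h4⟩ := hp
  rw [gridCorner, Prod.dist_eq, Real.dist_eq, Real.dist_eq, max_lt_iff, abs_lt, abs_lt]
  refine ⟨⟨?_, ?_⟩, ?_, ?_⟩ <;> linarith [hδ k.1, hδ k.2]

lemma exists_uniform_grid {M δ : ℝ} (hM : 0 ≤ M) (hδ : 0 < δ) :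
    ∃ (n : ℕ) (a : ℕ → ℝ), Monotone a ∧ a 0 = -M ∧ a n = M ∧ ∀ i, a (i + 1) - a i < δ := by
  obtain ⟨n, hn⟩ := exists_nat_gt (2 * M / δ)
  have hn0 : (0 : ℝ) < n := lt_of_le_of_lt (by positivity) hn
  refine ⟨n, fun i => -M + i * (2 * M / n), fun i j hij => ?_, by simp, ?_, fun i => ?_⟩
  · dsimp only
    gcongr
  · field_simp; ring
  · rw [div_lt_iff₀ hδ] at hn
    have : ((i + 1 : ℕ) : ℝ) * (2 * M / n) - i * (2 * M / n) = 2 * M / n := by push_cast; ring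
    dsimp only
    rw [add_sub_add_left_eq_sub, this, div_lt_iff₀ hn0]
    linarith

end Grid

lemma abs_integral_sub_sum_gridCell_le (ν : Measure (ℝ × ℝ)) [IsProbabilityMeasure ν]
    {f : ℝ × ℝ → ℝ} (hf : Continuous f) {C : ℝ} (hC : ∀ p, |f p| ≤ C) {M δ η : ℝ} (hη : 0 ≤ η)
    (hfδ : ∀ p ∈ Icc (-M) M ×ˢ Icc (-M) M, ∀ q ∈ Icc (-M) M ×ˢ Icc (-M) M,
      dist p q < δ → dist (f p) (f q) < η)
    {n : ℕ} {a : ℕ → ℝ} (ha : Monotone a) (ha0 : a 0 = -M) (han : a n = M)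
    (hgap : ∀ i, a (i + 1) - a i < δ) :
    |∫ p, f p ∂ν
        - ∑ k ∈ Finset.range n ×ˢ Finset.range n, f (gridCorner a k) * ν.real (gridCell a k)|
      ≤ η + C * (1 - ν.real (Ioc (-M) M ×ˢ Ioc (-M) M)) := by
  rw [← ha0, ← han] at hfδ ⊢
  rw [← biUnion_gridCell ha n, ← probReal_compl_eq_one_sub
    (Finset.measurableSet_biUnion _ fun k _ => measurableSet_gridCell k)]
  refine abs_integral_sub_sum_le
    ((integrable_const C).mono' hf.aestronglyMeasurable (.of_forall hC)) hC hη
    (fun k _ => measurableSet_gridCell k) ((pairwise_disjoint_gridCell ha).set_pairwise _) _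
    fun k hk p hp => ?_
  rw [← Real.dist_eq]
  exact (hfδ p (gridCell_subset_Icc_prod_Icc ha hk hp) _ (gridCorner_mem_Icc_prod_Icc ha hk)
    (dist_gridCorner_lt hgap hp)).le

theorem tendsto_integral_of_tendsto_measureReal_Ioc_prod_Ioc {μs : ℕ → Measure (ℝ × ℝ)}
    {μ : Measure (ℝ × ℝ)} [∀ N, IsProbabilityMeasure (μs N)] [IsProbabilityMeasure μ]
    (hrect : ∀ a b c d : ℝ, a ≤ b → c ≤ d → Tendsto (fun N => (μs N).real (Ioc a b ×ˢ Ioc c d))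
      atTop (𝓝 (μ.real (Ioc a b ×ˢ Ioc c d))))
    {f : ℝ × ℝ → ℝ} (hf : Continuous f) {C : ℝ} (hC : ∀ p, |f p| ≤ C) :
    Tendsto (fun N => ∫ p, f p ∂μs N) atTop (𝓝 (∫ p, f p ∂μ)) := by
  refine tendsto_of_forall_approx fun ε hε => ?_
  obtain ⟨M, hM, hMε⟩ :
      ∃ M : ℝ, 0 ≤ M ∧ C * (1 - μ.real (Ioc (-M) M ×ˢ Ioc (-M) M)) < ε / 2 := by
    have := ((tendsto_measureReal_Ioc_prod_Ioc_atTop (μ := μ)).const_sub 1).const_mul C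
    rw [probReal_univ, sub_self, mul_zero] at this
    exact ((eventually_ge_atTop 0).and (this.eventually (gt_mem_nhds (by positivity)))).exists
  obtain ⟨δ, hδ, hfδ⟩ := Metric.uniformContinuousOn_iff.1
    ((isCompact_Icc.prod isCompact_Icc).uniformContinuousOn_of_continuous hf.continuousOn)
    (ε / 2) (by positivity)
  obtain ⟨n, a, ha, ha0, han, hgap⟩ := exists_uniform_grid hM hδ
  have happrox := fun (ν : Measure (ℝ × ℝ)) [IsProbabilityMeasure ν] =>
    abs_integral_sub_sum_gridCell_le ν hf hC (by positivity) hfδ ha ha0 han hgap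
  refine ⟨fun N => ∑ k ∈ Finset.range n ×ˢ Finset.range n,
      f (gridCorner a k) * (μs N).real (gridCell a k),
    ∑ k ∈ Finset.range n ×ˢ Finset.range n, f (gridCorner a k) * μ.real (gridCell a k),
    ?_, ?_, by linarith [happrox μ]⟩
  · exact tendsto_finsetSum _ fun k _ =>
      (hrect _ _ _ _ (ha k.1.le_succ) (ha k.2.le_succ)).const_mul _
  · have hQ := ((hrect (-M) M (-M) M (by linarith) (by linarith)).const_sub 1).const_mul C
    filter_upwards [hQ.eventually (gt_mem_nhds hMε)] with N hN
    linarith [happrox (μs N)]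

noncomputable def clip (β u : ℝ) : ℝ := max (-β) (min u β)

lemma continuous_clip (β : ℝ) : Continuous (clip β) :=
  continuous_const.max (continuous_id.min continuous_const)

lemma abs_clip_le {β : ℝ} (hβ : 0 ≤ β) (u : ℝ) : |clip β u| ≤ β := by
  unfold clip; grind [abs_le]

lemma abs_clip_le_abs {β : ℝ} (hβ : 0 ≤ β) (u : ℝ) : |clip β u| ≤ |u| := by
  unfold clip; grind [abs_le, le_abs_self, neg_abs_le]

lemma abs_sub_clip_le {β β' : ℝ} (hβ : 0 ≤ β) (hβ' : β' ≤ β) (u : ℝ) :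
    |u - clip β u| ≤ if β' ≤ |u| then |u| else 0 := by
  unfold clip; grind [abs_le, le_abs_self, neg_abs_le, abs_nonneg]

section Tails

variable {α : Type*} [MeasurableSpace α] {μ : Measure α} {g : α → ℝ}

lemma integrable_indicator_abs (hg : Integrable g μ) (hgm : Measurable g) (β : ℝ) :
    Integrable ({x | β ≤ |g x|}.indicator fun x => |g x|) μ :=
  hg.abs.indicator (measurableSet_le measurable_const hgm.abs)

lemma abs_integral_sub_integral_clip_le (hg : Integrable g μ) (hgm : Measurable g) {β β' : ℝ}
    (hβ : 0 ≤ β) (hβ' : β' ≤ β) :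
    |∫ x, g x ∂μ - ∫ x, clip β (g x) ∂μ|
      ≤ ∫ x, {x | β' ≤ |g x|}.indicator (fun x => |g x|) x ∂μ := by
  have hclip : Integrable (fun x => clip β (g x)) μ :=
    hg.mono ((continuous_clip β).comp_aestronglyMeasurable hg.1)
      (.of_forall fun x => by simpa only [Real.norm_eq_abs] using abs_clip_le_abs hβ (g x))
  rw [← integral_sub hg hclip]
  refine (abs_integral_le_integral_abs).trans
    (integral_mono (hg.sub hclip).abs (integrable_indicator_abs hg hgm β') fun x => ?_)
  simpa only [indicator_apply, mem_ofPred_eq] using abs_sub_clip_le hβ hβ' (g x)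

lemma tendsto_integral_indicator_abs_atTop (hg : Integrable g μ) (hgm : Measurable g) :
    Tendsto (fun β : ℝ => ∫ x, {x | β ≤ |g x|}.indicator (fun x => |g x|) x ∂μ) atTop (𝓝 0) := by
  have := tendsto_integral_filter_of_dominated_convergence (fun x => |g x|)
    (.of_forall fun β => (integrable_indicator_abs hg hgm β).1)
    (.of_forall fun β => .of_forall fun x => (norm_indicator_le_norm_self _ _).trans
      (by rw [Real.norm_eq_abs, abs_abs]))
    hg.abs (.of_forall fun x => tendsto_const_nhds.congr' <|
      (eventually_gt_atTop |g x|).mono fun β hβ =>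
        (indicator_of_notMem (s := {x | β ≤ |g x|}) (not_le.2 hβ) _).symm)
  simpa only [integral_zero] using this

lemma integral_indicator_abs_eq_toReal_lintegral (hgm : Measurable g) (β : ℝ) :
    ∫ x, {x | β ≤ |g x|}.indicator (fun x => |g x|) x ∂μ
      = (∫⁻ x, {x | β ≤ |g x|}.indicator (fun x => ENNReal.ofReal |g x|) x ∂μ).toReal := by
  rw [integral_eq_lintegral_of_nonneg_ae
    (.of_forall fun x => indicator_nonneg (fun _ _ => abs_nonneg _) x)
    (hgm.abs.indicator (measurableSet_le measurable_const hgm.abs)).aestronglyMeasurable]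
  congr 1
  refine lintegral_congr fun x => ?_
  by_cases hx : β ≤ |g x| <;> simp [hx]

end Tails

theorem tendsto_integral_of_tendsto_measureReal_Ioc_prod_Ioc_of_uniformIntegrable
    {μs : ℕ → Measure (ℝ × ℝ)} {μ : Measure (ℝ × ℝ)}
    [∀ N, IsProbabilityMeasure (μs N)] [IsProbabilityMeasure μ]
    (hrect : ∀ a b c d : ℝ, a ≤ b → c ≤ d → Tendsto (fun N => (μs N).real (Ioc a b ×ˢ Ioc c d))
      atTop (𝓝 (μ.real (Ioc a b ×ˢ Ioc c d))))
    {g : ℝ × ℝ → ℝ} (hg : Continuous g)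
    (hUI : ∀ ε : ℝ, 0 < ε → ∃ β : ℝ, 0 < β ∧ ∀ N,
      ∫⁻ p, {q | β ≤ |g q|}.indicator (fun q => ENNReal.ofReal |g q|) p ∂(μs N)
        < ENNReal.ofReal ε)
    (hint : ∀ N, Integrable g (μs N)) (hintμ : Integrable g μ) :
    Tendsto (fun N => ∫ p, g p ∂μs N) atTop (𝓝 (∫ p, g p ∂μ)) := by
  refine tendsto_of_forall_approx fun ε hε => ?_
  obtain ⟨β₀, hβ₀, hβ₀ε⟩ := hUI ε hε
  obtain ⟨β, hβ₀β, hβε⟩ := ((eventually_ge_atTop β₀).and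
    ((tendsto_integral_indicator_abs_atTop hintμ hg.measurable).eventually
      (gt_mem_nhds hε))).exists
  have hβ : 0 ≤ β := hβ₀.le.trans hβ₀β
  refine ⟨fun N => ∫ p, clip β (g p) ∂μs N, ∫ p, clip β (g p) ∂μ,
    tendsto_integral_of_tendsto_measureReal_Ioc_prod_Ioc hrect ((continuous_clip β).comp hg)
      (fun p => abs_clip_le hβ (g p)), .of_forall fun N => ?_,
    (abs_integral_sub_integral_clip_le hintμ hg.measurable hβ le_rfl).trans hβε.le⟩
  refine (abs_integral_sub_integral_clip_le (hint N) hg.measurable hβ hβ₀β).trans ?_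
  rw [integral_indicator_abs_eq_toReal_lintegral hg.measurable]
  exact (ENNReal.toReal_lt_of_lt_ofReal (hβ₀ε N)).le

noncomputable def layer (s x : ℝ) : ℝ := (if 0 ≤ s then 1 else 0) - if x ≤ s then 1 else 0

lemma layer_eq_indicator (s x : ℝ) :
    layer s x = (Ico 0 x).indicator 1 s - (Ico x 0).indicator 1 s := by
  simp only [layer, indicator_apply, mem_Ico, Pi.one_apply]
  split_ifs <;> grind

lemma abs_layer_eq_indicator (s x : ℝ) :
    |layer s x| = (Ico 0 x).indicator 1 s + (Ico x 0).indicator 1 s := by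
  simp only [layer, indicator_apply, mem_Ico, Pi.one_apply]
  split_ifs <;> grind

lemma integrable_indicator_Ico_one (a b : ℝ) : Integrable ((Ico a b).indicator (1 : ℝ → ℝ)) :=
  (integrable_indicator_iff measurableSet_Ico).2 (integrableOn_const measure_Ico_lt_top.ne)

lemma integrable_layer (x : ℝ) : Integrable (fun s => layer s x) := by
  simp_rw [layer_eq_indicator]
  exact (integrable_indicator_Ico_one 0 x).sub (integrable_indicator_Ico_one x 0)

lemma integral_layer (x : ℝ) : ∫ s, layer s x = x := by
  simp_rw [layer_eq_indicator]
  rw [integral_sub (integrable_indicator_Ico_one 0 x) (integrable_indicator_Ico_one x 0),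
    integral_indicator_one measurableSet_Ico, integral_indicator_one measurableSet_Ico,
    Real.volume_real_Ico, Real.volume_real_Ico]
  simp

lemma integral_abs_layer (x : ℝ) : ∫ s, |layer s x| = |x| := by
  simp_rw [abs_layer_eq_indicator]
  rw [integral_add (integrable_indicator_Ico_one 0 x) (integrable_indicator_Ico_one x 0),
    integral_indicator_one measurableSet_Ico, integral_indicator_one measurableSet_Ico,
    Real.volume_real_Ico, Real.volume_real_Ico]
  simp

lemma measurable_layer : Measurable (fun q : ℝ × ℝ => layer q.1 q.2) := by
  unfold layer
  exact (Measurable.ite (measurableSet_le measurable_const measurable_fst) measurable_const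
    measurable_const).sub (Measurable.ite (measurableSet_le measurable_snd measurable_fst)
      measurable_const measurable_const)

lemma mul_eq_integral_layer_mul_layer (x y : ℝ) :
    x * y = ∫ q : ℝ × ℝ, layer q.1 x * layer q.2 y := by
  rw [Measure.volume_eq_prod, integral_prod_mul (fun s => layer s x) (fun t => layer t y),
    integral_layer, integral_layer]

section Layer

variable {h : Measure (ℝ × ℝ)}

lemma integrable_layer_mul_layer_prod [SFinite h]
    (hi : Integrable (fun p : ℝ × ℝ => p.1 * p.2) h) :
    Integrable (fun r : (ℝ × ℝ) × (ℝ × ℝ) => layer r.2.1 r.1.1 * layer r.2.2 r.1.2)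
      (h.prod volume) := by
  have hmeas : Measurable (fun r : (ℝ × ℝ) × (ℝ × ℝ) => layer r.2.1 r.1.1 * layer r.2.2 r.1.2) :=
    (measurable_layer.comp (measurable_snd.fst.prodMk measurable_fst.fst)).mul
      (measurable_layer.comp (measurable_snd.snd.prodMk measurable_fst.snd))
  refine (integrable_prod_iff hmeas.aestronglyMeasurable).2 ⟨.of_forall fun p => ?_, ?_⟩
  · rw [Measure.volume_eq_prod]
    exact (integrable_layer p.1).mul_prod (integrable_layer p.2)
  · convert hi.abs using 2 with p
    simp only [norm_mul, Real.norm_eq_abs]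
    rw [Measure.volume_eq_prod,
      integral_prod_mul (fun s => |layer s p.1|) (fun t => |layer t p.2|),
      integral_abs_layer, integral_abs_layer, abs_mul]

lemma integral_mul_eq_integral_integral_layer [SFinite h]
    (hi : Integrable (fun p : ℝ × ℝ => p.1 * p.2) h) :
    ∫ p, p.1 * p.2 ∂h = ∫ q : ℝ × ℝ, ∫ p, layer q.1 p.1 * layer q.2 p.2 ∂h := by
  simp_rw [mul_eq_integral_layer_mul_layer _ (Prod.snd _)]
  exact integral_integral_swap (integrable_layer_mul_layer_prod hi)

lemma integral_layer_mul_layer [IsProbabilityMeasure h] (s t : ℝ) :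
    ∫ p, layer s p.1 * layer t p.2 ∂h =
      (if 0 ≤ s then 1 else 0) * (if 0 ≤ t then 1 else 0)
        - (if 0 ≤ t then 1 else 0) * (h.map Prod.fst).real (Iic s)
        - (if 0 ≤ s then 1 else 0) * (h.map Prod.snd).real (Iic t)
        + h.real (Iic s ×ˢ Iic t) := by
  set a : ℝ := if 0 ≤ s then 1 else 0
  set b : ℝ := if 0 ≤ t then 1 else 0
  have hpt : ∀ p : ℝ × ℝ, layer s p.1 * layer t p.2 =
      a * b - b * (Iic s).indicator 1 p.1 - a * (Iic t).indicator 1 p.2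
        + (Iic s ×ˢ Iic t).indicator 1 p := by
    rintro ⟨x, y⟩
    simp only [layer, indicator_apply, mem_prod, mem_Iic, Pi.one_apply, a, b]
    split_ifs <;> simp_all
  have hX : Integrable (fun p : ℝ × ℝ => b * (Iic s).indicator 1 p.1) h :=
    ((integrable_const 1).indicator measurableSet_Iic |>.comp_measurable measurable_fst).const_mul b
  have hY : Integrable (fun p : ℝ × ℝ => a * (Iic t).indicator 1 p.2) h :=
    ((integrable_const 1).indicator measurableSet_Iic |>.comp_measurable measurable_snd).const_mul a
  have hXY : Integrable ((Iic s ×ˢ Iic t).indicator (1 : ℝ × ℝ → ℝ)) h :=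
    (integrable_const 1).indicator (measurableSet_Iic.prod measurableSet_Iic)
  have hcX : Integrable (fun p : ℝ × ℝ => a * b - b * (Iic s).indicator 1 p.1) h :=
    (integrable_const _).sub hX
  have hcXY : Integrable (fun p : ℝ × ℝ =>
      a * b - b * (Iic s).indicator 1 p.1 - a * (Iic t).indicator 1 p.2) h := hcX.sub hY
  simp_rw [hpt]
  rw [integral_add hcXY hXY, integral_sub hcX hY, integral_sub (integrable_const _) hX,
    integral_const, integral_const_mul, integral_const_mul,
    ← integral_map measurable_fst.aemeasurable
      ((integrable_const 1).indicator measurableSet_Iic).aestronglyMeasurable,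
    ← integral_map measurable_snd.aemeasurable
      ((integrable_const 1).indicator measurableSet_Iic).aestronglyMeasurable,
    integral_indicator_one measurableSet_Iic, integral_indicator_one measurableSet_Iic,
    integral_indicator_one (measurableSet_Iic.prod measurableSet_Iic)]
  simp

end Layer

theorem integral_mul_le_of_measureReal_Iic_prod_Iic_le {h₁ h₂ : Measure (ℝ × ℝ)}
    [IsProbabilityMeasure h₁] [IsProbabilityMeasure h₂]
    (hfst : h₁.map Prod.fst = h₂.map Prod.fst) (hsnd : h₁.map Prod.snd = h₂.map Prod.snd)
    (hi₁ : Integrable (fun p : ℝ × ℝ => p.1 * p.2) h₁)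
    (hi₂ : Integrable (fun p : ℝ × ℝ => p.1 * p.2) h₂)
    (hle : ∀ s t, h₁.real (Iic s ×ˢ Iic t) ≤ h₂.real (Iic s ×ˢ Iic t)) :
    ∫ p, p.1 * p.2 ∂h₁ ≤ ∫ p, p.1 * p.2 ∂h₂ := by
  rw [integral_mul_eq_integral_integral_layer hi₁, integral_mul_eq_integral_integral_layer hi₂]
  refine integral_mono (integrable_layer_mul_layer_prod hi₁).integral_prod_right
    (integrable_layer_mul_layer_prod hi₂).integral_prod_right fun q => ?_
  simp only [integral_layer_mul_layer, hfst, hsnd]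
  linarith [hle q.1 q.2]

section Frechet

variable {α β : Type*} [MeasurableSpace α] [MeasurableSpace β] (h : Measure (α × β))
  {A : Set α} {B : Set β}

lemma measureReal_prod_le_map_fst [IsFiniteMeasure h] (hA : MeasurableSet A) :
    h.real (A ×ˢ B) ≤ (h.map Prod.fst).real A := by
  rw [map_measureReal_apply measurable_fst hA]
  exact measureReal_mono (prod_subset_preimage_fst A B)

lemma measureReal_prod_le_map_snd [IsFiniteMeasure h] (hB : MeasurableSet B) :
    h.real (A ×ˢ B) ≤ (h.map Prod.snd).real B := by
  rw [map_measureReal_apply measurable_snd hB]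
  exact measureReal_mono (prod_subset_preimage_snd A B)

lemma map_fst_add_map_snd_sub_one_le [IsProbabilityMeasure h] (hA : MeasurableSet A)
    (hB : MeasurableSet B) :
    (h.map Prod.fst).real A + (h.map Prod.snd).real B - 1 ≤ h.real (A ×ˢ B) := by
  rw [map_measureReal_apply measurable_fst hA, map_measureReal_apply measurable_snd hB,
    ← measureReal_union_add_inter (s := Prod.fst ⁻¹' A) (measurable_snd hB), ← Set.prod_eq]
  linarith [measureReal_le_one (μ := h) (s := Prod.fst ⁻¹' A ∪ Prod.snd ⁻¹' B)]

end Frechet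

section Couplings

variable {h H : Measure (ℝ × ℝ)} [IsProbabilityMeasure h] [IsProbabilityMeasure H]
  {γ φ : Measure ℝ}

lemma integral_mul_le_of_measureReal_eq_min (h₁ : h.map Prod.fst = γ)
    (h₂ : h.map Prod.snd = φ) (H₁ : H.map Prod.fst = γ) (H₂ : H.map Prod.snd = φ)
    (hi : Integrable (fun p : ℝ × ℝ => p.1 * p.2) h)
    (hiH : Integrable (fun p : ℝ × ℝ => p.1 * p.2) H)
    (hmin : ∀ x y, H.real (Iic x ×ˢ Iic y) = min (γ.real (Iic x)) (φ.real (Iic y))) :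
    ∫ p, p.1 * p.2 ∂h ≤ ∫ p, p.1 * p.2 ∂H :=
  integral_mul_le_of_measureReal_Iic_prod_Iic_le (h₁.trans H₁.symm) (h₂.trans H₂.symm) hi hiH
    fun s t => by
      rw [hmin, ← h₁, ← h₂]
      exact le_min (measureReal_prod_le_map_fst h measurableSet_Iic)
        (measureReal_prod_le_map_snd h measurableSet_Iic)

lemma integral_mul_le_of_measureReal_eq_max (h₁ : h.map Prod.fst = γ)
    (h₂ : h.map Prod.snd = φ) (H₁ : H.map Prod.fst = γ) (H₂ : H.map Prod.snd = φ)
    (hi : Integrable (fun p : ℝ × ℝ => p.1 * p.2) h)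
    (hiH : Integrable (fun p : ℝ × ℝ => p.1 * p.2) H)
    (hmax : ∀ x y, H.real (Iic x ×ˢ Iic y) = max 0 (γ.real (Iic x) + φ.real (Iic y) - 1)) :
    ∫ p, p.1 * p.2 ∂H ≤ ∫ p, p.1 * p.2 ∂h :=
  integral_mul_le_of_measureReal_Iic_prod_Iic_le (H₁.trans h₁.symm) (H₂.trans h₂.symm) hiH hi
    fun s t => by
      rw [hmax, ← h₁, ← h₂]
      exact max_le measureReal_nonneg
        (map_fst_add_map_snd_sub_one_le h measurableSet_Iic measurableSet_Iic)

end Couplings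

theorem stmt19_general (Hs : ℕ → Measure (ℝ × ℝ)) (H : Measure (ℝ × ℝ))
    [∀ N, IsProbabilityMeasure (Hs N)] [IsProbabilityMeasure H]
    (γ φ : Measure ℝ)
    (hmarg1 : H.map Prod.fst = γ) (hmarg2 : H.map Prod.snd = φ)
    (hcdf : ∀ x y : ℝ, Tendsto (fun N => (Hs N (Set.Iic x ×ˢ Set.Iic y)).toReal)
      atTop (nhds ((H (Set.Iic x ×ˢ Set.Iic y)).toReal)))
    (hUI : ∀ ε : ℝ, 0 < ε → ∃ β : ℝ, 0 < β ∧ ∀ N,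
      (∫⁻ p, Set.indicator {q : ℝ × ℝ | β ≤ |q.1 * q.2|}
        (fun q => ENNReal.ofReal |q.1 * q.2|) p ∂(Hs N)) < ENNReal.ofReal ε)
    (hint : ∀ N, Integrable (fun p : ℝ × ℝ => p.1 * p.2) (Hs N))
    (hintH : Integrable (fun p : ℝ × ℝ => p.1 * p.2) H) :
    Tendsto (fun N => ∫ p, p.1 * p.2 ∂(Hs N)) atTop (nhds (∫ p, p.1 * p.2 ∂H)) ∧
    ((∀ x y : ℝ, (H (Set.Iic x ×ˢ Set.Iic y)).toReal
        = min ((γ (Set.Iic x)).toReal) ((φ (Set.Iic y)).toReal)) →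
      (∫ p, p.1 * p.2 ∂H) - (∫ x, x ∂γ) * (∫ x, x ∂φ)
        = sSup {c : ℝ | ∃ h : Measure (ℝ × ℝ), IsProbabilityMeasure h ∧
            h.map Prod.fst = γ ∧ h.map Prod.snd = φ ∧
            Integrable (fun p : ℝ × ℝ => p.1 * p.2) h ∧
            c = (∫ p, p.1 * p.2 ∂h) - (∫ x, x ∂γ) * (∫ x, x ∂φ)}) ∧
    ((∀ x y : ℝ, (H (Set.Iic x ×ˢ Set.Iic y)).toReal
        = max 0 ((γ (Set.Iic x)).toReal + (φ (Set.Iic y)).toReal - 1)) →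
      (∫ p, p.1 * p.2 ∂H) - (∫ x, x ∂γ) * (∫ x, x ∂φ)
        = sInf {c : ℝ | ∃ h : Measure (ℝ × ℝ), IsProbabilityMeasure h ∧
            h.map Prod.fst = γ ∧ h.map Prod.snd = φ ∧
            Integrable (fun p : ℝ × ℝ => p.1 * p.2) h ∧
            c = (∫ p, p.1 * p.2 ∂h) - (∫ x, x ∂γ) * (∫ x, x ∂φ)}) := by
  refine ⟨tendsto_integral_of_tendsto_measureReal_Ioc_prod_Ioc_of_uniformIntegrable
    (fun a b c d hab hcd => tendsto_measureReal_Ioc_prod_Ioc_of_cdf hcdf hab hcd)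
    (continuous_fst.mul continuous_snd) hUI hint hintH, fun hmin => ?_, fun hmax => ?_⟩
  · refine Eq.symm <| IsGreatest.csSup_eq ⟨⟨H, inferInstance, hmarg1, hmarg2, hintH, rfl⟩, ?_⟩
    rintro c ⟨h, _, h₁, h₂, hi, rfl⟩
    exact sub_le_sub_right
      (integral_mul_le_of_measureReal_eq_min h₁ h₂ hmarg1 hmarg2 hi hintH hmin) _
  · refine Eq.symm <| IsLeast.csInf_eq ⟨⟨H, inferInstance, hmarg1, hmarg2, hintH, rfl⟩, ?_⟩
    rintro c ⟨h, _, h₁, h₂, hi, rfl⟩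
    exact sub_le_sub_right
      (integral_mul_le_of_measureReal_eq_max h₁ h₂ hmarg1 hmarg2 hi hintH hmax) _

/-- Weak convergence (pointwise convergence of bivariate distribution
functions) plus uniform integrability of the product implies convergence of
the product moments `E_{H_N}[y₁y₀] → E_H[y₁y₀]`; in particular, if the limit
is the upper (resp. lower) Fréchet coupling of the marginals `γ, φ`, the
limiting covariance is the supremum (resp. infimum) of the covariance over all
couplings of `γ` and `φ`. -/
theorem stmt19 (Hs : ℕ → Measure (ℝ × ℝ)) (H : Measure (ℝ × ℝ))
    [∀ N, IsProbabilityMeasure (Hs N)] [IsProbabilityMeasure H]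
    (γ φ : Measure ℝ) [IsProbabilityMeasure γ] [IsProbabilityMeasure φ]
    (hmarg1 : H.map Prod.fst = γ) (hmarg2 : H.map Prod.snd = φ)
    (hcdf : ∀ x y : ℝ, Tendsto (fun N => (Hs N (Set.Iic x ×ˢ Set.Iic y)).toReal)
      atTop (nhds ((H (Set.Iic x ×ˢ Set.Iic y)).toReal)))
    (hUI : ∀ ε : ℝ, 0 < ε → ∃ β : ℝ, 0 < β ∧ ∀ N,
      (∫⁻ p, Set.indicator {q : ℝ × ℝ | β ≤ |q.1 * q.2|}
        (fun q => ENNReal.ofReal |q.1 * q.2|) p ∂(Hs N)) < ENNReal.ofReal ε)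
    (hint : ∀ N, Integrable (fun p : ℝ × ℝ => p.1 * p.2) (Hs N))
    (hintH : Integrable (fun p : ℝ × ℝ => p.1 * p.2) H) :
    Tendsto (fun N => ∫ p, p.1 * p.2 ∂(Hs N)) atTop (nhds (∫ p, p.1 * p.2 ∂H)) ∧
    ((∀ x y : ℝ, (H (Set.Iic x ×ˢ Set.Iic y)).toReal
        = min ((γ (Set.Iic x)).toReal) ((φ (Set.Iic y)).toReal)) →
      (∫ p, p.1 * p.2 ∂H) - (∫ x, x ∂γ) * (∫ x, x ∂φ)
        = sSup {c : ℝ | ∃ h : Measure (ℝ × ℝ), IsProbabilityMeasure h ∧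
            h.map Prod.fst = γ ∧ h.map Prod.snd = φ ∧
            Integrable (fun p : ℝ × ℝ => p.1 * p.2) h ∧
            c = (∫ p, p.1 * p.2 ∂h) - (∫ x, x ∂γ) * (∫ x, x ∂φ)}) ∧
    ((∀ x y : ℝ, (H (Set.Iic x ×ˢ Set.Iic y)).toReal
        = max 0 ((γ (Set.Iic x)).toReal + (φ (Set.Iic y)).toReal - 1)) →
      (∫ p, p.1 * p.2 ∂H) - (∫ x, x ∂γ) * (∫ x, x ∂φ)
        = sInf {c : ℝ | ∃ h : Measure (ℝ × ℝ), IsProbabilityMeasure h ∧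
            h.map Prod.fst = γ ∧ h.map Prod.snd = φ ∧
            Integrable (fun p : ℝ × ℝ => p.1 * p.2) h ∧
            c = (∫ p, p.1 * p.2 ∂h) - (∫ x, x ∂γ) * (∫ x, x ∂φ)}) :=
  stmt19_general Hs H γ φ hmarg1 hmarg2 hcdf hUI hint hintH
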